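/- arXiv:2004.12578 — 4 statements merged into one kernel-verified Lean document; each statement's English description precedes it below -/
import Mathlib

section
/- For any integrable function f on (0,∞), there exists an N-function G (a continuous convex function G:[0,∞)→[0,∞) with G(0)=0, G(t)>0 for t>0, G(t)/t → 0 as t → 0, and G(t)/t → ∞ as t → ∞) such that the function t ↦ G(|f(t)|) is integrable on (0,∞). -/
open MeasureTheory Set Filter Topology

/-- An N-function: continuous convex `G : [0,∞) → [0,∞)` with `G 0 = 0`, `G t > 0` for `t > 0`,
`G t / t → 0` as `t → 0+` and `G t / t → ∞` as `t → ∞`. -/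
def IsNFunction (G : ℝ → ℝ) : Prop :=
  ContinuousOn G (Ici 0) ∧ ConvexOn ℝ (Ici 0) G ∧ (∀ t, 0 ≤ t → 0 ≤ G t) ∧ G 0 = 0 ∧
  (∀ t, 0 < t → 0 < G t) ∧
  Tendsto (fun t => G t / t) (𝓝[>] 0) (𝓝 0) ∧
  Tendsto (fun t => G t / t) atTop atTop

/-- An Orlicz function: convex `G : [0,∞) → [0,∞)` with `G 0 = 0`, continuous at `0`,
and not identically zero. -/
def IsOrliczFunction (G : ℝ → ℝ) : Prop :=
  ConvexOn ℝ (Ici 0) G ∧ (∀ t, 0 ≤ t → 0 ≤ G t) ∧ G 0 = 0 ∧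
  ContinuousWithinAt G (Ici 0) 0 ∧ ∃ t, 0 ≤ t ∧ G t ≠ 0

/-- Decreasing rearrangement of `|f|` with respect to Lebesgue measure on `(0,1)`. -/
noncomputable def mu01 (f : ℝ → ℝ) (t : ℝ) : ℝ :=
  sInf {s : ℝ | 0 ≤ s ∧ volume {x | x ∈ Ioo (0:ℝ) 1 ∧ s < |f x|} ≤ ENNReal.ofReal t}

/-- Decreasing rearrangement of `|f|` with respect to Lebesgue measure on `(0,∞)`. -/
noncomputable def muInf (f : ℝ → ℝ) (t : ℝ) : ℝ :=
  sInf {s : ℝ | 0 ≤ s ∧ volume {x | x ∈ Ioi (0:ℝ) ∧ s < |f x|} ≤ ENNReal.ofReal t}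

/-- Hardy–Littlewood–Pólya submajorization `|f| ≺≺ g` on `(0,1)`. -/
def Submaj01 (f g : ℝ → ℝ) : Prop :=
  ∀ t ∈ Ioc (0:ℝ) 1,
    ∫⁻ s in Ioo (0:ℝ) t, ENNReal.ofReal (mu01 f s) ≤
      ∫⁻ s in Ioo (0:ℝ) t, ENNReal.ofReal (mu01 g s)

/-- Hardy–Littlewood–Pólya submajorization `|f| ≺≺ g` on `(0,∞)`. -/
def SubmajInf (f g : ℝ → ℝ) : Prop :=
  ∀ t : ℝ, 0 < t →
    ∫⁻ s in Ioo (0:ℝ) t, ENNReal.ofReal (muInf f s) ≤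
      ∫⁻ s in Ioo (0:ℝ) t, ENNReal.ofReal (muInf g s)

/-!
De la Vallée-Poussin's construction. Since `∫ (‖f‖ - c)⁺ → 0` as `c → ∞`, there are thresholds
`a k ≥ k + 1` with `∫ (‖f‖ - a k)⁺ ≤ 2⁻ᵏ`. Take `G x = x² / (1 + x) + ∑ₖ (x - a k)⁺`. The hinge
sum is locally finite, convex, vanishes on `[0, 1]` and dominates `n x - ∑_{k<n} a k` for every
`n`, so `G x / x → ∞`; the term `x² / (1 + x)` makes `G` positive with `G x / x → 0` at `0`.
Because `x² / (1 + x) ≤ x`, we get `∫ G ‖f‖ ≤ ∫ ‖f‖ + ∑ₖ 2⁻ᵏ` even when the measure is infinite.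
-/

theorem ConvexOn.tsum {E ι : Type*} [AddCommMonoid E] [Module ℝ E] {s : Set E}
    {f : ι → E → ℝ} (hs : Convex ℝ s) (hf : ∀ i, ConvexOn ℝ s (f i))
    (hsum : ∀ x ∈ s, Summable fun i => f i x) : ConvexOn ℝ s fun x => ∑' i, f i x := by
  refine ⟨hs, fun x hx y hy p q hp hq hpq => ?_⟩
  have hsx := (hsum x hx).mul_left p
  have hsy := (hsum y hy).mul_left q
  calc ∑' i, f i (p • x + q • y) ≤ ∑' i, (p * f i x + q * f i y) :=
        (hsum _ (hs hx hy hp hq hpq)).tsum_le_tsum (fun i => (hf i).2 hx hy hp hq hpq) (hsx.add hsy)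
    _ = p • ∑' i, f i x + q • ∑' i, f i y := by
        rw [hsx.tsum_add hsy, (hsum x hx).tsum_mul_left, (hsum y hy).tsum_mul_left]; rfl

section IntegrableTsum

variable {α : Type*} [MeasurableSpace α] {μ : Measure α}

theorem integrable_tsum_of_nonneg {ι : Type*} [Countable ι] {F : ι → α → ℝ}
    (hF : ∀ i, Integrable (F i) μ) (hF_nonneg : ∀ i x, 0 ≤ F i x)
    (h_sum : Summable fun i => ∫ x, F i x ∂μ) : Integrable (fun x => ∑' i, F i x) μ := by
  have h_toReal : ∀ x, (∑' i, ENNReal.ofReal (F i x)).toReal = ∑' i, F i x := fun x => by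
    rw [ENNReal.tsum_toReal_eq fun _ => ENNReal.ofReal_ne_top]
    simp only [ENNReal.toReal_ofReal (hF_nonneg _ x)]
  have h_lintegral : ∫⁻ x, ∑' i, ENNReal.ofReal (F i x) ∂μ ≠ ⊤ := by
    rw [lintegral_tsum fun i => (hF i).aemeasurable.ennreal_ofReal]
    simp_rw [← ofReal_integral_eq_lintegral_ofReal (hF _) (Eventually.of_forall (hF_nonneg _))]
    rw [← ENNReal.ofReal_tsum_of_nonneg (fun i => integral_nonneg (hF_nonneg i)) h_sum]
    exact ENNReal.ofReal_ne_top
  simpa only [h_toReal] using integrable_toReal_of_lintegral_ne_top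
    (AEMeasurable.tsum fun i => (hF i).aemeasurable.ennreal_ofReal) h_lintegral

theorem tendsto_integral_max_sub_atTop {g : α → ℝ} (hg : Integrable g μ) :
    Tendsto (fun c : ℝ => ∫ x, max (g x - c) 0 ∂μ) atTop (𝓝 0) := by
  have h_meas : ∀ c, AEStronglyMeasurable (fun x => max (g x - c) 0) μ := fun c =>
    ((hg.aemeasurable.sub aemeasurable_const).max aemeasurable_const).aestronglyMeasurable
  have h_bound : ∀ c, 0 ≤ c → ∀ x, ‖max (g x - c) 0‖ ≤ |g x| := fun c hc x => by
    rw [Real.norm_of_nonneg (le_max_right _ _)]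
    exact max_le (by linarith [le_abs_self (g x)]) (abs_nonneg _)
  have h_lim : ∀ x, Tendsto (fun c => max (g x - c) 0) atTop (𝓝 0) := fun x =>
    tendsto_const_nhds.congr' <| (eventually_ge_atTop (g x)).mono fun c hc =>
      (max_eq_right (by linarith)).symm
  simpa using tendsto_integral_filter_of_dominated_convergence (fun x => |g x|)
    (Eventually.of_forall h_meas)
    ((eventually_ge_atTop 0).mono fun c hc => Eventually.of_forall (h_bound c hc))
    hg.abs (Eventually.of_forall h_lim)

theorem exists_seq_integral_max_sub_le {g : α → ℝ} (hg : Integrable g μ) :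
    ∃ a : ℕ → ℝ, (∀ k : ℕ, (k : ℝ) + 1 ≤ a k) ∧
      ∀ k, ∫ x, max (g x - a k) 0 ∂μ ≤ (1 / 2 : ℝ) ^ k := by
  have h : ∀ k : ℕ, ∃ c : ℝ, (k : ℝ) + 1 ≤ c ∧ ∫ x, max (g x - c) 0 ∂μ ≤ (1 / 2) ^ k := fun k =>
    ((eventually_ge_atTop _).and <| ((tendsto_integral_max_sub_atTop hg).eventually_le_const
      (by positivity : (0 : ℝ) < (1 / 2) ^ k))).exists
  choose a ha using h
  exact ⟨a, fun k => (ha k).1, fun k => (ha k).2⟩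

end IntegrableTsum

noncomputable def hingeSum (a : ℕ → ℝ) (x : ℝ) : ℝ := ∑' k, max (x - a k) 0

section HingeSum

open Finset

variable {a : ℕ → ℝ}

theorem hingeSum_eq_sum_range {N : ℕ} {x : ℝ} (h : ∀ k, N ≤ k → x ≤ a k) :
    hingeSum a x = ∑ k ∈ range N, max (x - a k) 0 :=
  tsum_eq_sum fun k hk => max_eq_right <| sub_nonpos.2 <| h k <| by simpa using hk

theorem hingeSum_eq_zero {x : ℝ} (h : ∀ k, x ≤ a k) : hingeSum a x = 0 := by
  simpa using hingeSum_eq_sum_range (N := 0) fun k _ => h k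

theorem hingeSum_nonneg (x : ℝ) : 0 ≤ hingeSum a x :=
  tsum_nonneg fun _ => le_max_right _ _

theorem summable_hinge (ha : Tendsto a atTop atTop) (x : ℝ) :
    Summable fun k => max (x - a k) 0 := by
  obtain ⟨N, hN⟩ := eventually_atTop.1 (tendsto_atTop.1 ha x)
  exact summable_of_ne_finset_zero (s := range N) fun k hk =>
    max_eq_right <| sub_nonpos.2 <| hN k <| by simpa using hk

theorem continuous_hingeSum (ha : Tendsto a atTop atTop) : Continuous (hingeSum a) := by
  refine continuous_iff_continuousAt.2 fun x => ?_
  obtain ⟨N, hN⟩ := eventually_atTop.1 (tendsto_atTop.1 ha (x + 1))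
  have h_local : (fun y => ∑ k ∈ range N, max (y - a k) 0) =ᶠ[𝓝 x] hingeSum a :=
    (eventually_lt_nhds (lt_add_one x)).mono fun y hy =>
      (hingeSum_eq_sum_range fun k hk => hy.le.trans (hN k hk)).symm
  exact (by fun_prop : Continuous fun y => ∑ k ∈ range N, max (y - a k) 0).continuousAt.congr
    h_local

theorem convexOn_hingeSum (ha : Tendsto a atTop atTop) : ConvexOn ℝ univ (hingeSum a) :=
  ConvexOn.tsum convex_univ
    (fun _ => ((convexOn_id convex_univ).sub (concaveOn_const _ convex_univ)).sup
      (convexOn_const 0 convex_univ))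
    fun x _ => summable_hinge ha x

theorem tendsto_hingeSum_div_atTop (ha : Tendsto a atTop atTop) :
    Tendsto (fun x => hingeSum a x / x) atTop atTop := by
  refine tendsto_atTop.2 fun b => ?_
  set M := ⌈b⌉₊ + 1
  set A := ∑ k ∈ range M, a k
  filter_upwards [eventually_ge_atTop (max 1 A)] with x hx
  have hx1 : 1 ≤ x := le_of_max_le_left hx
  have hxA : A ≤ x := le_of_max_le_right hx
  have hbM : b + 1 ≤ M := by push_cast [M]; linarith [Nat.le_ceil b]
  have h_partial : M * x - A ≤ hingeSum a x :=
    calc M * x - A = ∑ k ∈ range M, (x - a k) := by simp [A, sum_sub_distrib]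
      _ ≤ ∑ k ∈ range M, max (x - a k) 0 := sum_le_sum fun k _ => le_max_left _ _
      _ ≤ hingeSum a x := (summable_hinge ha x).sum_le_tsum _ fun _ _ => le_max_right _ _
  rw [le_div_iff₀ (by linarith)]
  nlinarith

end HingeSum

theorem convexOn_sq_div_one_add : ConvexOn ℝ (Ici 0) fun x : ℝ => x ^ 2 / (1 + x) := by
  have h_inv : ConvexOn ℝ (Ici 0) fun x : ℝ => (1 + x)⁻¹ := by
    have := ((convexOn_zpow (𝕜 := ℝ) (-1)).translate_right 1).subset
      (fun x (hx : x ∈ Ici (0 : ℝ)) => show 0 < 1 + x by linarith [mem_Ici.1 hx]) (convex_Ici 0)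
    simpa only [Function.comp_def, zpow_neg_one] using this
  refine (((convexOn_id (convex_Ici 0)).sub (concaveOn_const 1 (convex_Ici 0))).add h_inv).congr
    fun x (hx : x ∈ Ici 0) => ?_
  have : 1 + x ≠ 0 := by linarith [mem_Ici.1 hx]
  show x - 1 + (1 + x)⁻¹ = x ^ 2 / (1 + x)
  field_simp
  ring

theorem sq_div_one_add_le {x : ℝ} (hx : 0 ≤ x) : x ^ 2 / (1 + x) ≤ x := by
  rw [div_le_iff₀ (by positivity)]
  nlinarith

theorem tendsto_sq_div_one_add_div_nhdsGT_zero :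
    Tendsto (fun x : ℝ => x ^ 2 / (1 + x) / x) (𝓝[>] 0) (𝓝 0) := by
  have h : Tendsto (fun x : ℝ => x / (1 + x)) (𝓝[>] 0) (𝓝 0) := by
    have : ContinuousAt (fun x : ℝ => x / (1 + x)) 0 := by fun_prop (disch := norm_num)
    simpa using this.tendsto.mono_left nhdsWithin_le_nhds
  refine h.congr' (eventually_mem_nhdsWithin.mono fun x (hx : 0 < x) => ?_)
  field_simp

noncomputable def valleePoussin (a : ℕ → ℝ) (x : ℝ) : ℝ := x ^ 2 / (1 + x) + hingeSum a x

section ValleePoussin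

variable {a : ℕ → ℝ}

theorem isNFunction_valleePoussin (ha_tendsto : Tendsto a atTop atTop) (ha_one : ∀ k, 1 ≤ a k) :
    IsNFunction (valleePoussin a) := by
  have h_small : ∀ x ≤ 1, hingeSum a x = 0 := fun x hx =>
    hingeSum_eq_zero fun k => hx.trans (ha_one k)
  refine ⟨?_, ?_, fun x hx => ?_, ?_, fun x hx => ?_, ?_, ?_⟩
  · refine ContinuousOn.add ?_ (continuous_hingeSum ha_tendsto).continuousOn
    exact (by fun_prop : Continuous fun x : ℝ => x ^ 2).continuousOn.div (by fun_prop)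
      fun x hx => by linarith [mem_Ici.1 hx]
  · exact convexOn_sq_div_one_add.add
      ((convexOn_hingeSum ha_tendsto).subset (subset_univ _) (convex_Ici 0))
  · exact add_nonneg (by positivity) (hingeSum_nonneg x)
  · simp [valleePoussin, h_small 0 zero_le_one]
  · exact add_pos_of_pos_of_nonneg (by positivity) (hingeSum_nonneg x)
  · refine tendsto_sq_div_one_add_div_nhdsGT_zero.congr' ?_
    filter_upwards [Ioo_mem_nhdsGT zero_lt_one] with x hx
    simp [valleePoussin, h_small x hx.2.le]
  · refine tendsto_atTop_mono' _ ?_ (tendsto_hingeSum_div_atTop ha_tendsto)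
    filter_upwards [eventually_gt_atTop 0] with x hx
    have : 0 ≤ x ^ 2 / (1 + x) := by positivity
    exact div_le_div_of_nonneg_right (le_add_of_nonneg_left this) hx.le

variable {α : Type*} [MeasurableSpace α] {μ : Measure α}

theorem integrable_valleePoussin_comp {g : α → ℝ} (hg : Integrable g μ) (hg_nonneg : ∀ x, 0 ≤ g x)
    (ha_nonneg : ∀ k, 0 ≤ a k) (h_sum : Summable fun k => ∫ x, max (g x - a k) 0 ∂μ) :
    Integrable (fun x => valleePoussin a (g x)) μ := by
  have h_hinge : ∀ k, Integrable (fun x => max (g x - a k) 0) μ := fun k =>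
    hg.mono' ((hg.aemeasurable.sub aemeasurable_const).max aemeasurable_const).aestronglyMeasurable
      (Eventually.of_forall fun x => by
        rw [Real.norm_of_nonneg (le_max_right _ _)]
        exact max_le (by linarith [ha_nonneg k]) (hg_nonneg x))
  have h_base : Integrable (fun x => g x ^ 2 / (1 + g x)) μ :=
    hg.mono' ((hg.aemeasurable.pow_const 2).div
        (aemeasurable_const.add hg.aemeasurable)).aestronglyMeasurable
      (Eventually.of_forall fun x => by
        rw [Real.norm_of_nonneg (by have := hg_nonneg x; positivity)]
        exact sq_div_one_add_le (hg_nonneg x))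
  exact h_base.add (integrable_tsum_of_nonneg h_hinge (fun _ _ => le_max_right _ _) h_sum)

end ValleePoussin

theorem exists_isNFunction_integrable_comp_norm {α E : Type*} [MeasurableSpace α] {μ : Measure α}
    [NormedAddCommGroup E] {f : α → E} (hf : Integrable f μ) :
    ∃ G : ℝ → ℝ, IsNFunction G ∧ Integrable (fun x => G ‖f x‖) μ := by
  obtain ⟨a, ha, ha_int⟩ := exists_seq_integral_max_sub_le hf.norm
  have ha_one : ∀ k, 1 ≤ a k := fun k => by linarith [ha k, (k.cast_nonneg : (0 : ℝ) ≤ k)]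
  have ha_tendsto : Tendsto a atTop atTop :=
    tendsto_atTop_mono ha (tendsto_natCast_atTop_atTop.atTop_add tendsto_const_nhds)
  refine ⟨valleePoussin a, isNFunction_valleePoussin ha_tendsto ha_one,
    integrable_valleePoussin_comp hf.norm (fun x => norm_nonneg _)
      (fun k => zero_le_one.trans (ha_one k)) ?_⟩
  exact summable_geometric_two.of_nonneg_of_le
    (fun k => integral_nonneg fun x => le_max_right _ _) ha_int

theorem stmt2 (f : ℝ → ℝ) (hf : IntegrableOn f (Ioi 0) volume) :
    ∃ G : ℝ → ℝ, IsNFunction G ∧ IntegrableOn (fun t => G |f t|) (Ioi 0) volume := by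
  simpa only [Real.norm_eq_abs, IntegrableOn] using exists_isNFunction_integrable_comp_norm hf
end

section
/- Let f and g be nonincreasing integrable functions on (0,∞) with ∫_0^t f(s) ds ≤ ∫_0^t g(s) ds for every 0 < t < ∞. Then for every increasing continuous convex function φ on [0,∞), ∫_0^t φ(f(s)) ds ≤ ∫_0^t φ(g(s)) ds for every 0 < t < ∞. -/
/-!
Let `c` be a nondecreasing, nonnegative subgradient of `φ` on `[0,∞)`, so that
`φ g - φ f ≥ c(f) (g - f)` pointwise. The weight `w = c ∘ f` is nonincreasing, so by the
layer-cake formula `∫ w f` and `∫ w g` are integrals over `l` of `∫ f` and `∫ g` on the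
superlevel sets `{w > l}`, which are initial intervals `(0, u)` up to an endpoint; hence
`∫ c(f) f ≤ ∫ c(f) g` by majorization, and the claim follows. To make `∫ c(f) f` finite, `f`
is first truncated to `min f n`, which stays nonincreasing and majorized by `g`, and then
`n → ∞` by monotone convergence. Replacing `φ` by `max φ 0` changes neither side.
-/

open MeasureTheory Set Filter Topology

open scoped ENNReal

theorem ConvexOn.exists_monotone_subgradient_Ici {φ : ℝ → ℝ} (hφc : ConvexOn ℝ (Ici 0) φ)
    (hφm : MonotoneOn φ (Ici 0)) :
    ∃ c : ℝ → ℝ, Monotone c ∧ 0 ≤ c ∧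
      ∀ x, 0 ≤ x → ∀ y, 0 ≤ y → φ x + c x * (y - x) ≤ φ y := by
  -- Right derivative inside; at the endpoint, `0` is a subgradient because `φ` is monotone.
  set c : ℝ → ℝ := fun x => if 0 < x then derivWithin φ (Ioi x) x else 0
  have hint : ∀ {x}, 0 < x → x ∈ interior (Ici (0 : ℝ)) := fun hx => by
    rwa [interior_Ici, mem_Ioi]
  have slope_le : ∀ {x y}, 0 ≤ y → y < x → slope φ y x ≤ c x := fun hy hyx => by
    simp only [c, if_pos (hy.trans_lt hyx)]
    exact (hφc.slope_le_leftDeriv_of_mem_interior hy (hint (hy.trans_lt hyx)) hyx).trans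
      (hφc.leftDeriv_le_rightDeriv_of_mem_interior (hint (hy.trans_lt hyx)))
  have hc0 : 0 ≤ c := fun x => by
    by_cases hx : 0 < x
    · refine le_trans ?_ (slope_le le_rfl hx)
      rw [slope_def_field]
      exact div_nonneg (sub_nonneg.2 (hφm self_mem_Ici hx.le hx.le)) (by linarith)
    · simp [c, hx]
  refine ⟨c, fun a b hab => ?_, hc0, fun x hx y hy => ?_⟩
  · by_cases ha : 0 < a
    · simp only [c, if_pos ha, if_pos (ha.trans_le hab)]
      exact hφc.monotoneOn_rightDeriv (hint ha) (hint (ha.trans_le hab)) hab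
    · simpa [c, ha] using hc0 b
  rcases hx.eq_or_lt with rfl | hx
  · simpa [c] using hφm self_mem_Ici hy hy
  rcases lt_trichotomy y x with hyx | rfl | hxy
  · have := slope_le hy hyx
    rw [slope_def_field, div_le_iff₀ (by linarith)] at this
    linarith
  · simp
  · have := hφc.rightDeriv_le_slope_of_mem_interior (hint hx) hy hxy
    rw [slope_def_field, le_div_iff₀ (by linarith)] at this
    simp only [c, if_pos hx]
    linarith

theorem MonotoneOn.aemeasurable_comp_of_ae_nonneg {α : Type*} [MeasurableSpace α]
    {μ : Measure α} {φ : ℝ → ℝ} {h : α → ℝ} (hφ : MonotoneOn φ (Ici 0))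
    (hh : AEMeasurable h μ) (hh0 : ∀ᵐ a ∂μ, 0 ≤ h a) :
    AEMeasurable (fun a => φ (h a)) μ := by
  have hmono : Monotone fun x => φ (max x 0) := fun x y hxy =>
    hφ (le_max_right x 0) (le_max_right y 0) (max_le_max_right 0 hxy)
  refine (hmono.measurable.comp_aemeasurable hh).congr (hh0.mono fun a ha => ?_)
  simp [Function.comp, max_eq_left ha]

theorem AntitoneOn.exists_Ioo_subset_superlevel_subset_Ioc {w : ℝ → ℝ} {t : ℝ}
    (hw : AntitoneOn w (Ioo 0 t)) (l : ℝ) :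
    ∃ u ≤ t, Ioo 0 u ⊆ {s | l < w s} ∩ Ioo 0 t ∧ {s | l < w s} ∩ Ioo 0 t ⊆ Ioc 0 u := by
  set S := {s | l < w s} ∩ Ioo 0 t
  rcases S.eq_empty_or_nonempty with hS | hS
  · refine ⟨min t 0, min_le_left t 0, ?_, by simp [hS]⟩
    rw [Ioo_eq_empty (not_lt.2 (min_le_right t 0))]
    exact empty_subset _
  have hbdd : BddAbove S := ⟨t, fun s hs => hs.2.2.le⟩
  refine ⟨sSup S, csSup_le hS fun s hs => hs.2.2.le, fun s hs => ?_,
    fun s hs => ⟨hs.2.1, le_csSup hbdd hs⟩⟩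
  obtain ⟨s', ⟨hls', hs'⟩, hss'⟩ := exists_lt_of_lt_csSup hS hs.2
  exact ⟨hls'.trans_le (hw ⟨hs.1, hss'.trans hs'.2⟩ hs' hss'.le), hs.1, hss'.trans hs'.2⟩

theorem setLIntegral_le_of_Ioo_subset_of_subset_Ioc {F G : ℝ → ℝ≥0∞} {S : Set ℝ} {u : ℝ}
    (hIoo : Ioo 0 u ⊆ S) (hIoc : S ⊆ Ioc 0 u)
    (hFG : ∫⁻ s in Ioo 0 u, F s ≤ ∫⁻ s in Ioo 0 u, G s) :
    ∫⁻ s in S, F s ≤ ∫⁻ s in S, G s :=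
  calc ∫⁻ s in S, F s ≤ ∫⁻ s in Ioc 0 u, F s := lintegral_mono_set hIoc
    _ = ∫⁻ s in Ioo 0 u, F s := setLIntegral_congr Ioo_ae_eq_Ioc.symm
    _ ≤ ∫⁻ s in Ioo 0 u, G s := hFG
    _ ≤ ∫⁻ s in S, G s := lintegral_mono_set hIoo

theorem lintegral_mul_ofReal_le_of_antitoneOn {F G : ℝ → ℝ≥0∞} {w : ℝ → ℝ} {t : ℝ}
    (hF : AEMeasurable F (volume.restrict (Ioo 0 t)))
    (hG : AEMeasurable G (volume.restrict (Ioo 0 t)))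
    (hw : AntitoneOn w (Ioo 0 t)) (hw0 : ∀ s ∈ Ioo 0 t, 0 ≤ w s)
    (hwm : AEMeasurable w (volume.restrict (Ioo 0 t)))
    (hFG : ∀ u ∈ Ioc 0 t, ∫⁻ s in Ioo 0 u, F s ≤ ∫⁻ s in Ioo 0 u, G s) :
    ∫⁻ s in Ioo 0 t, F s * ENNReal.ofReal (w s) ≤
      ∫⁻ s in Ioo 0 t, G s * ENNReal.ofReal (w s) := by
  have layercake : ∀ H : ℝ → ℝ≥0∞, AEMeasurable H (volume.restrict (Ioo 0 t)) →
      ∫⁻ s in Ioo 0 t, H s * ENNReal.ofReal (w s) =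
        ∫⁻ l in Ioi 0, ∫⁻ s in {s | l < w s} ∩ Ioo 0 t, H s := by
    intro H hH
    have hac := withDensity_absolutelyContinuous (volume.restrict (Ioo 0 t)) H
    rw [← Pi.mul_def, ← lintegral_withDensity_eq_lintegral_mul₀ hH hwm.ennreal_ofReal,
      lintegral_eq_lintegral_meas_lt _ (hac (ae_restrict_of_forall_mem measurableSet_Ioo hw0))
        (hwm.mono' hac)]
    refine lintegral_congr fun l => ?_
    rw [withDensity_apply', Measure.restrict_restrict' measurableSet_Ioo]
  rw [layercake F hF, layercake G hG]
  refine lintegral_mono fun l => ?_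
  obtain ⟨u, hut, hIoo, hIoc⟩ := hw.exists_Ioo_subset_superlevel_subset_Ioc l
  refine setLIntegral_le_of_Ioo_subset_of_subset_Ioc hIoo hIoc ?_
  rcases le_or_gt u 0 with hu | hu
  · simp [Ioo_eq_empty (not_lt.2 hu)]
  · exact hFG u ⟨hu, hut⟩

section Majorization

variable {φ f g : ℝ → ℝ} {t : ℝ}

theorem lintegral_convex_comp_le_of_majorized_of_bounded (hφm : MonotoneOn φ (Ici 0))
    (hφc : ConvexOn ℝ (Ici 0) φ) (hφ0 : ∀ x, 0 ≤ x → 0 ≤ φ x)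
    (hf0 : ∀ s ∈ Ioo 0 t, 0 ≤ f s) (hg0 : ∀ s ∈ Ioo 0 t, 0 ≤ g s)
    (hfa : AntitoneOn f (Ioo 0 t)) {M : ℝ} (hfM : ∀ s ∈ Ioo 0 t, f s ≤ M)
    (hfm : AEMeasurable f (volume.restrict (Ioo 0 t)))
    (hgm : AEMeasurable g (volume.restrict (Ioo 0 t)))
    (hfg : ∀ u ∈ Ioc 0 t,
      ∫⁻ s in Ioo 0 u, ENNReal.ofReal (f s) ≤ ∫⁻ s in Ioo 0 u, ENNReal.ofReal (g s)) :
    ∫⁻ s in Ioo 0 t, ENNReal.ofReal (φ (f s)) ≤ ∫⁻ s in Ioo 0 t, ENNReal.ofReal (φ (g s)) := by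
  obtain ⟨c, hcm, hc0, hsupp⟩ := hφc.exists_monotone_subgradient_Ici hφm
  set W : (ℝ → ℝ) → ℝ → ℝ≥0∞ := fun h s => ENNReal.ofReal (h s) * ENNReal.ofReal (c (f s))
  have hWfg : ∫⁻ s in Ioo 0 t, W f s ≤ ∫⁻ s in Ioo 0 t, W g s :=
    lintegral_mul_ofReal_le_of_antitoneOn hfm.ennreal_ofReal hgm.ennreal_ofReal
      (hcm.comp_antitoneOn hfa) (fun s _ => hc0 _) (hcm.measurable.comp_aemeasurable hfm) hfg
  have hWf_ne_top : ∫⁻ s in Ioo 0 t, W f s ≠ ∞ := by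
    refine ne_top_of_le_ne_top (b := ∫⁻ _ in Ioo 0 t, ENNReal.ofReal (M * c M)) ?_
      (setLIntegral_mono' measurableSet_Ioo fun s hs => ?_)
    · simp [ENNReal.mul_eq_top]
    · simp only [W, ← ENNReal.ofReal_mul (hf0 s hs)]
      exact ENNReal.ofReal_le_ofReal (mul_le_mul (hfM s hs) (hcm (hfM s hs)) (hc0 _)
        ((hf0 s hs).trans (hfM s hs)))
  have hpoint : ∀ s ∈ Ioo 0 t,
      ENNReal.ofReal (φ (f s)) + W g s ≤ ENNReal.ofReal (φ (g s)) + W f s := fun s hs => by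
    simp only [W, ← ENNReal.ofReal_mul (hf0 s hs), ← ENNReal.ofReal_mul (hg0 s hs),
      ← ENNReal.ofReal_add (hφ0 _ (hf0 s hs)) (mul_nonneg (hg0 s hs) (hc0 _)),
      ← ENNReal.ofReal_add (hφ0 _ (hg0 s hs)) (mul_nonneg (hf0 s hs) (hc0 _))]
    exact ENNReal.ofReal_le_ofReal (by linarith [hsupp _ (hf0 s hs) _ (hg0 s hs)])
  refine ENNReal.le_of_add_le_add_right hWf_ne_top ?_
  calc (∫⁻ s in Ioo 0 t, ENNReal.ofReal (φ (f s))) + ∫⁻ s in Ioo 0 t, W f s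
      ≤ (∫⁻ s in Ioo 0 t, ENNReal.ofReal (φ (f s))) + ∫⁻ s in Ioo 0 t, W g s := by gcongr
    _ ≤ ∫⁻ s in Ioo 0 t, ENNReal.ofReal (φ (f s)) + W g s := le_lintegral_add _ _
    _ ≤ ∫⁻ s in Ioo 0 t, ENNReal.ofReal (φ (g s)) + W f s :=
      setLIntegral_mono' measurableSet_Ioo hpoint
    _ = (∫⁻ s in Ioo 0 t, ENNReal.ofReal (φ (g s))) + ∫⁻ s in Ioo 0 t, W f s :=
      lintegral_add_right' _
        (hfm.ennreal_ofReal.mul (hcm.measurable.comp_aemeasurable hfm).ennreal_ofReal)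

theorem lintegral_convex_comp_le_of_majorized (hφm : MonotoneOn φ (Ici 0))
    (hφc : ConvexOn ℝ (Ici 0) φ) (hφ0 : ∀ x, 0 ≤ x → 0 ≤ φ x)
    (hf0 : ∀ s ∈ Ioo 0 t, 0 ≤ f s) (hg0 : ∀ s ∈ Ioo 0 t, 0 ≤ g s)
    (hfa : AntitoneOn f (Ioo 0 t))
    (hfm : AEMeasurable f (volume.restrict (Ioo 0 t)))
    (hgm : AEMeasurable g (volume.restrict (Ioo 0 t)))
    (hfg : ∀ u ∈ Ioc 0 t,
      ∫⁻ s in Ioo 0 u, ENNReal.ofReal (f s) ≤ ∫⁻ s in Ioo 0 u, ENNReal.ofReal (g s)) :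
    ∫⁻ s in Ioo 0 t, ENNReal.ofReal (φ (f s)) ≤ ∫⁻ s in Ioo 0 t, ENNReal.ofReal (φ (g s)) := by
  have htrunc0 : ∀ (n : ℕ), ∀ s ∈ Ioo 0 t, 0 ≤ min (f s) n := fun n s hs =>
    le_min (hf0 s hs) n.cast_nonneg
  have hbound : ∀ n : ℕ, ∫⁻ s in Ioo 0 t, ENNReal.ofReal (φ (min (f s) n)) ≤
      ∫⁻ s in Ioo 0 t, ENNReal.ofReal (φ (g s)) := fun n =>
    lintegral_convex_comp_le_of_majorized_of_bounded hφm hφc hφ0 (htrunc0 n) hg0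
      (fun a ha b hb hab => min_le_min_right _ (hfa ha hb hab)) (fun s _ => min_le_right _ _)
      (hfm.min aemeasurable_const) hgm fun u hu =>
        (lintegral_mono fun s => ENNReal.ofReal_le_ofReal (min_le_left _ _)).trans (hfg u hu)
  refine le_of_tendsto' (lintegral_tendsto_of_tendsto_of_monotone (fun n => ?_) ?_ ?_) hbound
  · exact (hφm.aemeasurable_comp_of_ae_nonneg (hfm.min aemeasurable_const)
      (ae_restrict_of_forall_mem measurableSet_Ioo (htrunc0 n))).ennreal_ofReal
  · refine ae_restrict_of_forall_mem measurableSet_Ioo fun s hs m n hmn => ?_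
    exact ENNReal.ofReal_le_ofReal (hφm (htrunc0 m s hs) (htrunc0 n s hs)
      (min_le_min_left _ (Nat.cast_le.2 hmn)))
  · refine ae_of_all _ fun s => tendsto_atTop_of_eventually_const (i₀ := ⌈f s⌉₊) fun n hn => ?_
    rw [min_eq_left (Nat.ceil_le.1 hn)]

end Majorization

theorem stmt4_general (f g : ℝ → ℝ)
    (hf0 : ∀ x ∈ Ioi (0:ℝ), 0 ≤ f x) (hg0 : ∀ x ∈ Ioi (0:ℝ), 0 ≤ g x)
    (hfa : AntitoneOn f (Ioi 0))
    (hfi : IntegrableOn f (Ioi 0) volume) (hgi : IntegrableOn g (Ioi 0) volume)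
    (hmaj : ∀ t : ℝ, 0 < t →
      ∫ s in Ioo (0:ℝ) t, f s ≤ ∫ s in Ioo (0:ℝ) t, g s)
    (φ : ℝ → ℝ) (hφm : MonotoneOn φ (Ici 0))
    (hφconv : ConvexOn ℝ (Ici 0) φ) :
    ∀ t : ℝ, 0 < t →
      ∫⁻ s in Ioo (0:ℝ) t, ENNReal.ofReal (φ (f s)) ≤
        ∫⁻ s in Ioo (0:ℝ) t, ENNReal.ofReal (φ (g s)) := by
  intro t _
  have hlintegral : ∀ u ∈ Ioc 0 t,
      ∫⁻ s in Ioo 0 u, ENNReal.ofReal (f s) ≤ ∫⁻ s in Ioo 0 u, ENNReal.ofReal (g s) := by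
    intro u hu
    rw [← ofReal_integral_eq_lintegral_ofReal (hfi.mono_set Ioo_subset_Ioi_self)
        (ae_restrict_of_forall_mem measurableSet_Ioo fun s hs => hf0 s hs.1),
      ← ofReal_integral_eq_lintegral_ofReal (hgi.mono_set Ioo_subset_Ioi_self)
        (ae_restrict_of_forall_mem measurableSet_Ioo fun s hs => hg0 s hs.1)]
    exact ENNReal.ofReal_le_ofReal (hmaj u hu.1)
  have hmax := lintegral_convex_comp_le_of_majorized (φ := fun x => max (φ x) 0)
    (fun x hx y hy hxy => max_le_max_right 0 (hφm hx hy hxy))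
    (hφconv.sup (convexOn_const 0 (convex_Ici 0))) (fun x _ => le_max_right _ _)
    (fun s hs => hf0 s hs.1) (fun s hs => hg0 s hs.1) (hfa.mono Ioo_subset_Ioi_self)
    (hfi.mono_set Ioo_subset_Ioi_self).aemeasurable
    (hgi.mono_set Ioo_subset_Ioi_self).aemeasurable hlintegral
  simpa only [ENNReal.ofReal_max, ENNReal.ofReal_zero, max_eq_left zero_le] using hmax

theorem stmt4 (f g : ℝ → ℝ)
    (hf0 : ∀ x ∈ Ioi (0:ℝ), 0 ≤ f x) (hg0 : ∀ x ∈ Ioi (0:ℝ), 0 ≤ g x)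
    (hfa : AntitoneOn f (Ioi 0)) (hga : AntitoneOn g (Ioi 0))
    (hfi : IntegrableOn f (Ioi 0) volume) (hgi : IntegrableOn g (Ioi 0) volume)
    (hmaj : ∀ t : ℝ, 0 < t →
      ∫ s in Ioo (0:ℝ) t, f s ≤ ∫ s in Ioo (0:ℝ) t, g s)
    (φ : ℝ → ℝ) (hφm : MonotoneOn φ (Ici 0)) (hφc : ContinuousOn φ (Ici 0))
    (hφconv : ConvexOn ℝ (Ici 0) φ) :
    ∀ t : ℝ, 0 < t →
      ∫⁻ s in Ioo (0:ℝ) t, ENNReal.ofReal (φ (f s)) ≤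
        ∫⁻ s in Ioo (0:ℝ) t, ENNReal.ofReal (φ (g s)) :=
  stmt4_general f g hf0 hg0 hfa hfi hgi hmaj φ hφm hφconv
end

section
/- Let K be a bounded subset of L¹(0,1). Suppose there exists a convex function G:[0,∞)→[0,∞) with G(0)=0, G continuous at 0, G not identically zero, G(t)/t → ∞ as t → ∞, and sup{∫_0^1 G(|f(s)|) ds : f ∈ K} < ∞. Then there exists a positive function g ∈ L¹(0,1) such that |f| ≺≺ g for all f ∈ K, i.e., ∫_0^t μ(s,f) ds ≤ ∫_0^t μ(s,g) ds for all t ∈ (0,1] and all f ∈ K. -/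
open MeasureTheory Set Filter Topology

/-
By superlinearity of `G`, the tails `∫ (|f| - A)₊` are small uniformly on `K` once `A` is large
(de la Vallée-Poussin), so one can pick levels `A n` with tails at most `2⁻ⁿ`. Since
`μ(·, f) ≤ A + μ(·, (|f| - A)₊)` and `∫₀¹ μ(·, h) ≤ ∫₀¹ |h|`, this gives
`∫₀ᵀ μ(·, f) ≤ A n * T + 2⁻ⁿ` for all `n`. The majorant `g` is a decreasing step function
`∑ cₙ 1_(0, uₙ)` with `∑ cₙ uₙ < ∞` whose integral over `(0, T)` exceeds `A n * T + 2⁻ⁿ` when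
`u (n + 1) < T ≤ u n`; being decreasing and lower semicontinuous, `g` lies below `μ(·, g)`.
-/

open scoped ENNReal

theorem eventually_lintegral_ofReal_abs_sub_le {α : Type*} [MeasurableSpace α] {μ : Measure α}
    {K : Set (α → ℝ)} {G : ℝ → ℝ} (hG : Tendsto (fun t => G t / t) atTop atTop) {C : ℝ}
    (hC : ∀ f ∈ K, ∫⁻ x, ENNReal.ofReal (G |f x|) ∂μ ≤ ENNReal.ofReal C) {ε : ℝ} (hε : 0 < ε) :
    ∀ᶠ A in atTop, ∀ f ∈ K, ∫⁻ x, ENNReal.ofReal (|f x| - A) ∂μ ≤ ENNReal.ofReal ε := by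
  set M := (|C| + 1) / ε
  have hM : 0 < M := by positivity
  filter_upwards [eventually_gt_atTop 0,
    eventually_forall_ge_atTop.2 (hG.eventually_ge_atTop M)] with A hA hGA f hf
  have hpoint : ∀ x, ENNReal.ofReal (|f x| - A) ≤ ENNReal.ofReal (G |f x| * M⁻¹) := by
    intro x
    rcases le_or_gt |f x| A with hle | hlt
    · simp [ENNReal.ofReal_eq_zero.2 (sub_nonpos.2 hle)]
    · have hGx := hGA _ hlt.le
      rw [le_div_iff₀ (hA.trans hlt)] at hGx
      refine ENNReal.ofReal_le_ofReal ((le_mul_inv_iff₀ hM).2 ?_)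
      nlinarith
  calc ∫⁻ x, ENNReal.ofReal (|f x| - A) ∂μ
      ≤ ∫⁻ x, ENNReal.ofReal (G |f x|) * ENNReal.ofReal M⁻¹ ∂μ := by
        refine lintegral_mono fun x => (hpoint x).trans_eq ?_
        exact ENNReal.ofReal_mul' (inv_nonneg.2 hM.le)
    _ = (∫⁻ x, ENNReal.ofReal (G |f x|) ∂μ) * ENNReal.ofReal M⁻¹ :=
        lintegral_mul_const' _ _ ENNReal.ofReal_ne_top
    _ ≤ ENNReal.ofReal C * ENNReal.ofReal M⁻¹ := by gcongr; exact hC f hf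
    _ = ENNReal.ofReal (C * M⁻¹) := (ENNReal.ofReal_mul' (inv_nonneg.2 hM.le)).symm
    _ ≤ ENNReal.ofReal ε := by
        refine ENNReal.ofReal_le_ofReal ?_
        rw [inv_div, mul_div_assoc', div_le_iff₀ (by positivity)]
        nlinarith [le_abs_self C]

theorem exists_levels_lintegral_ofReal_abs_sub_le {α : Type*} [MeasurableSpace α]
    {μ : Measure α} {K : Set (α → ℝ)} {G : ℝ → ℝ} (hG : Tendsto (fun t => G t / t) atTop atTop)
    {C : ℝ} (hC : ∀ f ∈ K, ∫⁻ x, ENNReal.ofReal (G |f x|) ∂μ ≤ ENNReal.ofReal C) :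
    ∃ A : ℕ → ℝ, 0 < A 0 ∧ Monotone A ∧ ∀ n, ∀ f ∈ K,
      ∫⁻ x, ENNReal.ofReal (|f x| - A n) ∂μ ≤ ENNReal.ofReal ((1 / 2) ^ n) := by
  have hlevels : ∀ n, ∀ᶠ k : ℕ in atTop, 1 ≤ (k : ℝ) ∧ ∀ f ∈ K,
      ∫⁻ x, ENNReal.ofReal (|f x| - k) ∂μ ≤ ENNReal.ofReal ((1 / 2) ^ n) := fun n =>
    tendsto_natCast_atTop_atTop.eventually
      ((eventually_ge_atTop 1).and (eventually_lintegral_ofReal_abs_sub_le hG hC (by positivity)))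
  obtain ⟨φ, hφ, hφK⟩ := extraction_forall_of_eventually hlevels
  exact ⟨fun n => φ n, one_pos.trans_le (hφK 0).1, fun m n hmn => Nat.cast_le.2 (hφ.monotone hmn),
    fun n => (hφK n).2⟩

section Rearrangement

variable {f : ℝ → ℝ} {s t c : ℝ}

theorem mu01_nonneg (f : ℝ → ℝ) (t : ℝ) : 0 ≤ mu01 f t :=
  Real.sInf_nonneg fun _ hs => hs.1

theorem mu01_le (hc : 0 ≤ c)
    (h : volume {x | x ∈ Ioo (0:ℝ) 1 ∧ c < |f x|} ≤ ENNReal.ofReal t) : mu01 f t ≤ c :=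
  csInf_le ⟨0, fun _ hs => hs.1⟩ ⟨hc, h⟩

theorem lt_volume_of_lt_mu01 (hc : 0 ≤ c) (h : c < mu01 f t) :
    ENNReal.ofReal t < volume {x | x ∈ Ioo (0:ℝ) 1 ∧ c < |f x|} :=
  lt_of_not_ge fun h' => h.not_ge (mu01_le hc h')

theorem tendsto_volume_lt_abs (hf : AEMeasurable f (volume.restrict (Ioo 0 1))) :
    Tendsto (fun c => volume {x | x ∈ Ioo (0:ℝ) 1 ∧ c < |f x|}) atTop (𝓝 0) := by
  have hset : ∀ c : ℝ, volume {x | x ∈ Ioo (0:ℝ) 1 ∧ c < |f x|} =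
      volume.restrict (Ioo 0 1) {x | c < |f x|} := fun c => by
    rw [Measure.restrict_apply' measurableSet_Ioo, inter_comm]; rfl
  simp_rw [hset]
  have hlim := tendsto_measure_iInter_atTop (μ := volume.restrict (Ioo (0:ℝ) 1))
    (s := fun c : ℝ => {x | c < |f x|}) (fun c => nullMeasurableSet_lt aemeasurable_const hf.abs)
    (fun c d hcd x hx => lt_of_le_of_lt hcd hx) ⟨0, measure_ne_top _ _⟩
  rwa [iInter_eq_empty_iff.2 fun x => ⟨|f x|, fun hx => lt_irrefl |f x| hx⟩, measure_empty] at hlim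

theorem le_mu01 (hf : AEMeasurable f (volume.restrict (Ioo 0 1))) (ht : 0 < t)
    (h : ∀ d, 0 ≤ d → volume {x | x ∈ Ioo (0:ℝ) 1 ∧ d < |f x|} ≤ ENNReal.ofReal t → c ≤ d) :
    c ≤ mu01 f t := by
  obtain ⟨d, hd0, hd⟩ := ((eventually_ge_atTop 0).and ((tendsto_order.1
    (tendsto_volume_lt_abs hf)).2 _ (ENNReal.ofReal_pos.2 ht))).exists
  exact le_csInf ⟨d, hd0, hd.le⟩ fun d hd => h d hd.1 hd.2

theorem mu01_antitoneOn (hf : AEMeasurable f (volume.restrict (Ioo 0 1))) :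
    AntitoneOn (mu01 f) (Ioi 0) := fun _ ht _ _ htt' =>
  le_mu01 hf ht fun _ hd hvol => mu01_le hd (hvol.trans (ENNReal.ofReal_le_ofReal htt'))

theorem volume_lt_mu01_le (hc : 0 ≤ c) :
    volume ({s | c < mu01 f s} ∩ Ioo 0 1) ≤ volume {x | x ∈ Ioo (0:ℝ) 1 ∧ c < |f x|} := by
  set d := volume {x | x ∈ Ioo (0:ℝ) 1 ∧ c < |f x|}
  rcases eq_or_ne d ⊤ with hd | hd
  · exact hd ▸ le_top
  have hsub : {s | c < mu01 f s} ∩ Ioo 0 1 ⊆ Ioo 0 d.toReal := fun s ⟨hs, hs01⟩ =>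
    ⟨hs01.1, (ENNReal.ofReal_lt_iff_lt_toReal hs01.1.le hd).1 (lt_volume_of_lt_mu01 hc hs)⟩
  calc volume ({s | c < mu01 f s} ∩ Ioo 0 1) ≤ volume (Ioo 0 d.toReal) := measure_mono hsub
    _ = d := by rw [Real.volume_Ioo, sub_zero, ENNReal.ofReal_toReal hd]

theorem lintegral_mu01_le (hf : AEMeasurable f (volume.restrict (Ioo 0 1))) :
    ∫⁻ s in Ioo (0:ℝ) 1, ENNReal.ofReal (mu01 f s) ≤
      ∫⁻ x in Ioo (0:ℝ) 1, ENNReal.ofReal |f x| := by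
  have hmu : AEMeasurable (mu01 f) (volume.restrict (Ioo 0 1)) :=
    aemeasurable_restrict_of_antitoneOn measurableSet_Ioo
      ((mu01_antitoneOn hf).mono Ioo_subset_Ioi_self)
  rw [lintegral_eq_lintegral_meas_lt _ (ae_of_all _ (mu01_nonneg f)) hmu,
    lintegral_eq_lintegral_meas_lt _ (ae_of_all _ fun x => abs_nonneg (f x)) hf.abs]
  refine setLIntegral_mono' measurableSet_Ioi fun c hc => ?_
  rw [Measure.restrict_apply' measurableSet_Ioo, Measure.restrict_apply' measurableSet_Ioo]
  exact (volume_lt_mu01_le (le_of_lt hc)).trans_eq (by congr 1; ext x; simp [and_comm])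

theorem mu01_le_add_mu01_sub {A : ℝ} (hf : AEMeasurable f (volume.restrict (Ioo 0 1)))
    (hA : 0 ≤ A) (ht : 0 < t) : mu01 f t ≤ A + mu01 (fun x => max (|f x| - A) 0) t := by
  rw [← sub_le_iff_le_add']
  refine le_mu01 ((hf.abs.sub_const A).max aemeasurable_const) ht fun d hd hvol => ?_
  refine sub_le_iff_le_add'.2 (mu01_le (add_nonneg hA hd) (le_of_eq_of_le ?_ hvol))
  congr 1; ext x
  simp [abs_of_nonneg, hd.not_gt, lt_sub_iff_add_lt']

theorem setLIntegral_mu01_le {A T : ℝ} (hf : AEMeasurable f (volume.restrict (Ioo 0 1)))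
    (hA : 0 ≤ A) (hT : T ≤ 1) :
    ∫⁻ s in Ioo (0:ℝ) T, ENNReal.ofReal (mu01 f s) ≤
      ENNReal.ofReal A * ENNReal.ofReal T + ∫⁻ x in Ioo (0:ℝ) 1, ENNReal.ofReal (|f x| - A) := by
  set h : ℝ → ℝ := fun x => max (|f x| - A) 0
  have hh : AEMeasurable h (volume.restrict (Ioo 0 1)) :=
    (hf.abs.sub_const A).max aemeasurable_const
  calc ∫⁻ s in Ioo (0:ℝ) T, ENNReal.ofReal (mu01 f s)
      ≤ ∫⁻ s in Ioo (0:ℝ) T, (ENNReal.ofReal A + ENNReal.ofReal (mu01 h s)) :=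
        setLIntegral_mono' measurableSet_Ioo fun s hs =>
          (ENNReal.ofReal_le_ofReal (mu01_le_add_mu01_sub hf hA hs.1)).trans ENNReal.ofReal_add_le
    _ = ENNReal.ofReal A * ENNReal.ofReal T + ∫⁻ s in Ioo (0:ℝ) T, ENNReal.ofReal (mu01 h s) := by
        rw [lintegral_add_left measurable_const, setLIntegral_const, Real.volume_Ioo, sub_zero]
    _ ≤ ENNReal.ofReal A * ENNReal.ofReal T + ∫⁻ s in Ioo (0:ℝ) 1, ENNReal.ofReal (mu01 h s) :=
        add_le_add le_rfl (lintegral_mono_set (Ioo_subset_Ioo_right hT))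
    _ ≤ ENNReal.ofReal A * ENNReal.ofReal T + ∫⁻ x in Ioo (0:ℝ) 1, ENNReal.ofReal |h x| :=
        add_le_add le_rfl (lintegral_mu01_le hh)
    _ = ENNReal.ofReal A * ENNReal.ofReal T + ∫⁻ x in Ioo (0:ℝ) 1, ENNReal.ofReal (|f x| - A) := by
        simp [h, abs_of_nonneg]

theorem le_mu01_of_le_abs (hf : AEMeasurable f (volume.restrict (Ioo 0 1))) (hs : 0 < s)
    (hst : s < t) (ht : t ≤ 1) (hc : ∀ x ∈ Ioo 0 t, c ≤ |f x|) : c ≤ mu01 f s := by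
  refine le_mu01 hf hs fun d _ hvol => ?_
  by_contra! hdc
  have hsub : Ioo 0 t ⊆ {x | x ∈ Ioo (0:ℝ) 1 ∧ d < |f x|} := fun x hx =>
    ⟨⟨hx.1, hx.2.trans_le ht⟩, hdc.trans_le (hc x hx)⟩
  have hvol' := (measure_mono hsub).trans hvol
  rw [Real.volume_Ioo, sub_zero, ENNReal.ofReal_le_ofReal_iff hs.le] at hvol'
  linarith

end Rearrangement

noncomputable def stepSum (u c : ℕ → ℝ) (x : ℝ) : ℝ≥0∞ :=
  ∑' n, (Iio (u n)).indicator (fun _ => ENNReal.ofReal (c n)) x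

section StepSum

variable (u c : ℕ → ℝ)

theorem antitone_stepSum : Antitone (stepSum u c) := fun x y hxy =>
  ENNReal.tsum_le_tsum fun n => by
    by_cases hy : y ∈ Iio (u n)
    · rw [indicator_of_mem hy, indicator_of_mem (show x ∈ Iio (u n) from hxy.trans_lt hy)]
    · rw [indicator_of_notMem hy]
      exact zero_le

theorem lowerSemicontinuous_stepSum : LowerSemicontinuous (stepSum u c) :=
  lowerSemicontinuous_tsum fun _ => isOpen_Iio.lowerSemicontinuous_indicator zero_le

theorem setLIntegral_stepSum (T : ℝ) :
    ∫⁻ x in Ioo 0 T, stepSum u c x =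
      ∑' n, ENNReal.ofReal (c n) * ENNReal.ofReal (min (u n) T) := by
  unfold stepSum
  rw [lintegral_tsum fun n => (measurable_const.indicator measurableSet_Iio).aemeasurable]
  congr 1; ext n
  rw [lintegral_indicator_const measurableSet_Iio, Measure.restrict_apply measurableSet_Iio,
    Iio_inter_Ioo, Real.volume_Ioo, sub_zero]

end StepSum

section Antitone

variable {φ : ℝ → ℝ≥0∞}

theorem ne_top_of_antitone_of_lintegral_ne_top (hφ : Antitone φ)
    (hint : ∫⁻ x in Ioo 0 1, φ x ≠ ⊤) {x : ℝ} (hx : x ∈ Ioo 0 1) : φ x ≠ ⊤ := by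
  have hle : ENNReal.ofReal x * φ x ≤ ∫⁻ y in Ioo 0 1, φ y := calc
    ENNReal.ofReal x * φ x = ∫⁻ _ in Ioo 0 x, φ x := by
        rw [setLIntegral_const, Real.volume_Ioo, sub_zero, mul_comm]
    _ ≤ ∫⁻ y in Ioo 0 x, φ y := setLIntegral_mono' measurableSet_Ioo fun y hy => hφ hy.2.le
    _ ≤ ∫⁻ y in Ioo 0 1, φ y := lintegral_mono_set (Ioo_subset_Ioo_right hx.2.le)
  intro htop
  rw [htop, ENNReal.mul_top (ENNReal.ofReal_pos.2 hx.1).ne'] at hle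
  exact hint (top_le_iff.1 hle)

theorem le_ofReal_mu01_toReal (hφ : Antitone φ) (hlsc : LowerSemicontinuous φ)
    (hint : ∫⁻ x in Ioo 0 1, φ x ≠ ⊤) {s : ℝ} (hs : s ∈ Ioo 0 1) :
    φ s ≤ ENNReal.ofReal (mu01 (fun x => (φ x).toReal) s) := by
  refine le_of_forall_lt fun a ha => ?_
  obtain ⟨t, hat, hst, ht1⟩ := (((hlsc s a ha).filter_mono nhdsWithin_le_nhds).and
    (Ioo_mem_nhdsGT hs.2)).exists
  have hne : ∀ x ∈ Ioo 0 t, φ x ≠ ⊤ := fun x hx =>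
    ne_top_of_antitone_of_lintegral_ne_top hφ hint ⟨hx.1, hx.2.trans ht1⟩
  have hmu : (φ t).toReal ≤ mu01 (fun x => (φ x).toReal) s :=
    le_mu01_of_le_abs hlsc.measurable.ennreal_toReal.aemeasurable hs.1 hst ht1.le fun x hx =>
      (ENNReal.toReal_mono (hne x hx) (hφ hx.2.le)).trans (le_abs_self _)
  calc a < φ t := hat
    _ = ENNReal.ofReal (φ t).toReal := (ENNReal.ofReal_toReal
        (ne_top_of_antitone_of_lintegral_ne_top hφ hint ⟨hs.1.trans hst, ht1⟩)).symm
    _ ≤ _ := ENNReal.ofReal_le_ofReal hmu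

end Antitone

theorem exists_succ_lt_le {u : ℕ → ℝ} {T : ℝ} (h0 : T ≤ u 0) (h : ∃ m, u m < T) :
    ∃ n, u (n + 1) < T ∧ T ≤ u n := by
  by_contra! hcon
  obtain ⟨m, hm⟩ := h
  have hle : ∀ k, T ≤ u k := fun k =>
    Nat.rec h0 (fun k hk => not_lt.1 fun hlt => (hcon k hlt).not_ge hk) k
  exact (hle m).not_gt hm

/- The block `Iio (majorantWidth A n)` has height at least `A n` and area
`(A 0 + 2) / 2 ^ n ≥ 2 / 2 ^ n`; the widths start at `1` and tend to `0`. -/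
noncomputable def majorantWidth (A : ℕ → ℝ) (n : ℕ) : ℝ := (1 / 2) ^ n * (A 0 / A n)

noncomputable def majorantHeight (A : ℕ → ℝ) (n : ℕ) : ℝ := (1 + 2 / A 0) * A n

noncomputable def majorant (A : ℕ → ℝ) : ℝ → ℝ≥0∞ :=
  stepSum (majorantWidth A) (majorantHeight A)

section Majorant

variable {A : ℕ → ℝ}

theorem majorantHeight_mul_width (hA0 : 0 < A 0) (hA : Monotone A) (n : ℕ) :
    majorantHeight A n * majorantWidth A n = (A 0 + 2) * (1 / 2) ^ n := by
  have hAn : 0 < A n := hA0.trans_le (hA n.zero_le)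
  unfold majorantHeight majorantWidth
  field_simp

theorem majorantHeight_pos (hA0 : 0 < A 0) (hA : Monotone A) (n : ℕ) : 0 < majorantHeight A n := by
  have hAn : 0 < A n := hA0.trans_le (hA n.zero_le)
  unfold majorantHeight
  positivity

theorem majorantWidth_zero (hA0 : 0 < A 0) : majorantWidth A 0 = 1 := by
  simp [majorantWidth, hA0.ne']

theorem exists_majorantWidth_lt (hA0 : 0 < A 0) (hA : Monotone A) {T : ℝ} (hT : 0 < T) :
    ∃ m, majorantWidth A m < T := by
  obtain ⟨m, hm⟩ := exists_pow_lt_of_lt_one hT (by norm_num : (1 / 2 : ℝ) < 1)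
  refine ⟨m, lt_of_le_of_lt ?_ hm⟩
  have hAm : 0 < A m := hA0.trans_le (hA m.zero_le)
  exact mul_le_of_le_one_right (by positivity) ((div_le_one hAm).2 (hA m.zero_le))

theorem majorant_pos (hA0 : 0 < A 0) (hA : Monotone A) {x : ℝ} (hx : x < 1) : 0 < majorant A x := by
  refine lt_of_lt_of_le ?_ (ENNReal.le_tsum 0)
  rw [indicator_of_mem (show x ∈ Iio (majorantWidth A 0) by rwa [majorantWidth_zero hA0, mem_Iio])]
  exact ENNReal.ofReal_pos.2 (majorantHeight_pos hA0 hA 0)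

theorem lintegral_majorant_ne_top (hA0 : 0 < A 0) (hA : Monotone A) :
    ∫⁻ x in Ioo 0 1, majorant A x ≠ ⊤ := by
  have hterm : ∀ n, ENNReal.ofReal (majorantHeight A n) *
      ENNReal.ofReal (min (majorantWidth A n) 1) ≤ ENNReal.ofReal ((A 0 + 2) * (1 / 2) ^ n) :=
    fun n => by
      rw [← ENNReal.ofReal_mul (majorantHeight_pos hA0 hA n).le,
        ← majorantHeight_mul_width hA0 hA]
      exact ENNReal.ofReal_le_ofReal
        (mul_le_mul_of_nonneg_left (min_le_left _ _) (majorantHeight_pos hA0 hA n).le)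
  rw [majorant, setLIntegral_stepSum, ← lt_top_iff_ne_top]
  refine (ENNReal.tsum_le_tsum hterm).trans_lt ?_
  rw [← ENNReal.ofReal_tsum_of_nonneg (fun n => by positivity)
    (summable_geometric_two.mul_left _)]
  exact ENNReal.ofReal_lt_top

theorem le_setLIntegral_majorant (hA0 : 0 < A 0) (hA : Monotone A) {n : ℕ} {T : ℝ}
    (hnT : majorantWidth A (n + 1) < T) (hTn : T ≤ majorantWidth A n) :
    ENNReal.ofReal (A n) * ENNReal.ofReal T + ENNReal.ofReal ((1 / 2) ^ n) ≤
      ∫⁻ x in Ioo 0 T, majorant A x := by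
  have hpair := ENNReal.sum_le_tsum (f := fun k =>
    ENNReal.ofReal (majorantHeight A k) * ENNReal.ofReal (min (majorantWidth A k) T)) {n, n + 1}
  rw [Finset.sum_pair (by omega), min_eq_right hTn, min_eq_left hnT.le,
    ← ENNReal.ofReal_mul (p := majorantHeight A (n + 1)) (majorantHeight_pos hA0 hA _).le,
    majorantHeight_mul_width hA0 hA] at hpair
  rw [majorant, setLIntegral_stepSum]
  refine le_trans ?_ hpair
  have hAn : 0 < A n := hA0.trans_le (hA n.zero_le)
  gcongr
  · unfold majorantHeight
    nlinarith [div_pos two_pos hA0]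
  · rw [pow_succ]
    nlinarith [pow_pos (by norm_num : (0 : ℝ) < 1 / 2) n]

end Majorant

theorem stmt5_general (K : Set (ℝ → ℝ))
    (hK : ∀ f ∈ K, IntegrableOn f (Ioo 0 1) volume)
    (G : ℝ → ℝ)
    (hGt : Tendsto (fun t => G t / t) atTop atTop)
    (hsup : ∃ C : ℝ, ∀ f ∈ K,
      ∫⁻ s in Ioo (0:ℝ) 1, ENNReal.ofReal (G |f s|) ≤ ENNReal.ofReal C) :
    ∃ g : ℝ → ℝ, (∀ x ∈ Ioo (0:ℝ) 1, 0 < g x) ∧ IntegrableOn g (Ioo 0 1) volume ∧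
      ∀ f ∈ K, Submaj01 f g := by
  obtain ⟨C, hC⟩ := hsup
  obtain ⟨A, hA0, hA, hAK⟩ := exists_levels_lintegral_ofReal_abs_sub_le hGt hC
  have hanti := antitone_stepSum (majorantWidth A) (majorantHeight A)
  have hlsc := lowerSemicontinuous_stepSum (majorantWidth A) (majorantHeight A)
  have hint := lintegral_majorant_ne_top hA0 hA
  refine ⟨fun x => (majorant A x).toReal,
    fun x hx => ENNReal.toReal_pos (majorant_pos hA0 hA hx.2).ne'
      (ne_top_of_antitone_of_lintegral_ne_top hanti hint hx),
    integrable_toReal_of_lintegral_ne_top hlsc.measurable.aemeasurable hint, fun f hf T hT => ?_⟩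
  obtain ⟨n, hnT, hTn⟩ := exists_succ_lt_le (hT.2.trans_eq (majorantWidth_zero hA0).symm)
    (exists_majorantWidth_lt hA0 hA hT.1)
  calc ∫⁻ s in Ioo 0 T, ENNReal.ofReal (mu01 f s)
      ≤ ENNReal.ofReal (A n) * ENNReal.ofReal T +
          ∫⁻ x in Ioo 0 1, ENNReal.ofReal (|f x| - A n) :=
        setLIntegral_mu01_le (hK f hf).aemeasurable (hA0.le.trans (hA n.zero_le)) hT.2
    _ ≤ ENNReal.ofReal (A n) * ENNReal.ofReal T + ENNReal.ofReal ((1 / 2) ^ n) := by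
        gcongr; exact hAK n f hf
    _ ≤ ∫⁻ s in Ioo 0 T, majorant A s := le_setLIntegral_majorant hA0 hA hnT hTn
    _ ≤ ∫⁻ s in Ioo 0 T, ENNReal.ofReal (mu01 (fun x => (majorant A x).toReal) s) :=
        setLIntegral_mono' measurableSet_Ioo fun s hs =>
          le_ofReal_mu01_toReal hanti hlsc hint ⟨hs.1, hs.2.trans_le hT.2⟩

theorem stmt5 (K : Set (ℝ → ℝ))
    (hK : ∀ f ∈ K, IntegrableOn f (Ioo 0 1) volume)
    (hKb : ∃ C : ℝ, ∀ f ∈ K, ∫ x in Ioo (0:ℝ) 1, |f x| ≤ C)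
    (G : ℝ → ℝ) (hG : IsOrliczFunction G)
    (hGt : Tendsto (fun t => G t / t) atTop atTop)
    (hsup : ∃ C : ℝ, ∀ f ∈ K,
      ∫⁻ s in Ioo (0:ℝ) 1, ENNReal.ofReal (G |f s|) ≤ ENNReal.ofReal C) :
    ∃ g : ℝ → ℝ, (∀ x ∈ Ioo (0:ℝ) 1, 0 < g x) ∧ IntegrableOn g (Ioo 0 1) volume ∧
      ∀ f ∈ K, Submaj01 f g :=
  stmt5_general K hK G hGt hsup
end

section
/- Let K be a bounded subset of L¹(0,∞) and suppose there exists a positive g ∈ L¹(0,∞) with |f| ≺≺ g for all f ∈ K. Then there exists an N-function G (so in particular G(t)/t → ∞ as t → ∞) such that sup{∫_0^∞ G(|f(s)|) ds : f ∈ K} < ∞. -/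
/-!
De la Vallée Poussin: if `λₙ ≥ n + 1` and `∫ (|f| - λₙ)₊ ≤ 2⁻ⁿ` for every `f ∈ K`, then
`G t = t²/(1 + t) + ∑ₙ (t - λₙ)₊` is an N-function with `∫ G(|f|) ≤ ‖f‖₁ + 2` on `K`.

Such thresholds exist because `|f|` and `μ(·, f)` are equimeasurable, so
`∫ (|f| - λ)₊ = ∫ (μ(·, f) - λ)₊`, and submajorization by `g` gives
`s μ(s, f) ≤ ∫₀ˢ μ(·, f) ≤ ‖g‖₁`. Hence `μ(·, f) ≤ λ` on `[ε, ∞)` once `λ ≥ ‖g‖₁ / ε`, and the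
remaining part is at most `∫₀^ε μ(·, f) ≤ ∫₀^ε μ(·, g)`, which is small uniformly in `f`.
-/

open MeasureTheory Set Filter Topology

open scoped ENNReal

noncomputable def distribInf (f : ℝ → ℝ) (t : ℝ) : ℝ≥0∞ :=
  volume {x | x ∈ Ioi (0:ℝ) ∧ t < |f x|}

section Rearrangement

variable {f g : ℝ → ℝ}

lemma muInf_eq_sInf_distribInf (f : ℝ → ℝ) (t : ℝ) :
    muInf f t = sInf {v | 0 ≤ v ∧ distribInf f v ≤ ENNReal.ofReal t} := rfl

lemma distribInf_eq_restrict (f : ℝ → ℝ) (t : ℝ) :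
    distribInf f t = volume.restrict (Ioi 0) {x | t < |f x|} := by
  rw [Measure.restrict_apply' measurableSet_Ioi, distribInf, inter_comm]
  rfl

lemma antitone_distribInf (f : ℝ → ℝ) : Antitone (distribInf f) := fun _ _ h =>
  measure_mono fun _ hx => ⟨hx.1, h.trans_lt hx.2⟩

lemma exists_lt_distribInf_of_lt {t : ℝ} {c : ℝ≥0∞} (h : c < distribInf f t) :
    ∃ t' > t, c < distribInf f t' := by
  let A : ℕ → Set ℝ := fun n => {x | x ∈ Ioi (0:ℝ) ∧ t + 1 / (n + 1) < |f x|}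
  have hA : Monotone A := fun m n hmn x hx =>
    ⟨hx.1, lt_of_le_of_lt (by gcongr) hx.2⟩
  have hU : {x | x ∈ Ioi (0:ℝ) ∧ t < |f x|} = ⋃ n, A n := by
    ext x
    simp only [A, mem_iUnion, mem_ofPred_eq]
    refine ⟨fun ⟨hx, hlt⟩ => ?_, fun ⟨n, hx, hlt⟩ => ⟨hx, lt_trans (by simp; positivity) hlt⟩⟩
    obtain ⟨n, hn⟩ := exists_nat_one_div_lt (sub_pos.2 hlt)
    exact ⟨n, hx, by linarith⟩
  rw [distribInf, hU, hA.measure_iUnion, lt_iSup_iff] at h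
  obtain ⟨n, hn⟩ := h
  exact ⟨t + 1 / (n + 1), lt_add_of_pos_right t Nat.one_div_pos_of_nat, hn⟩

lemma ofReal_mul_distribInf_le (hf : AEMeasurable f (volume.restrict (Ioi 0))) (t : ℝ) :
    ENNReal.ofReal t * distribInf f t ≤ ∫⁻ x in Ioi 0, ENNReal.ofReal |f x| := by
  rw [distribInf_eq_restrict]
  calc _ ≤ ENNReal.ofReal t *
        volume.restrict (Ioi 0) {x | ENNReal.ofReal t ≤ ENNReal.ofReal |f x|} := by
        gcongr
        exact fun hx => ENNReal.ofReal_le_ofReal hx.le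
    _ ≤ _ := mul_meas_ge_le_lintegral₀ hf.abs.ennreal_ofReal _

lemma lintegral_ofReal_abs_ne_top (hf : IntegrableOn f (Ioi 0)) :
    ∫⁻ x in Ioi 0, ENNReal.ofReal |f x| ≠ ⊤ :=
  (Integrable.abs hf).lintegral_lt_top.ne

lemma exists_distribInf_le (hf : IntegrableOn f (Ioi 0)) {s : ℝ} (hs : 0 < s) :
    ∃ v, 0 ≤ v ∧ distribInf f v ≤ ENNReal.ofReal s := by
  set I := ∫⁻ x in Ioi 0, ENNReal.ofReal |f x|
  set v := (I.toReal + 1) / s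
  refine ⟨v, by positivity, le_of_not_gt fun hlt => ?_⟩
  have : ENNReal.ofReal (I.toReal + 1) ≤ I := calc
    ENNReal.ofReal (I.toReal + 1) = ENNReal.ofReal v * ENNReal.ofReal s := by
      rw [← ENNReal.ofReal_mul (by positivity), div_mul_cancel₀ _ hs.ne']
    _ ≤ ENNReal.ofReal v * distribInf f v := by gcongr
    _ ≤ I := ofReal_mul_distribInf_le hf.aemeasurable v
  exact this.not_gt ((ENNReal.lt_ofReal_iff_toReal_lt (lintegral_ofReal_abs_ne_top hf)).2
    (lt_add_one _))

lemma muInf_nonneg (f : ℝ → ℝ) (t : ℝ) : 0 ≤ muInf f t :=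
  Real.sInf_nonneg fun _ hv => hv.1

lemma lt_muInf_iff (hf : IntegrableOn f (Ioi 0)) {s t : ℝ} (hs : 0 < s) (ht : 0 ≤ t) :
    t < muInf f s ↔ ENNReal.ofReal s < distribInf f t := by
  rw [muInf_eq_sInf_distribInf]
  have hbdd : BddBelow {v | 0 ≤ v ∧ distribInf f v ≤ ENNReal.ofReal s} := ⟨0, fun _ hv => hv.1⟩
  constructor
  · intro h
    by_contra! hle
    exact (csInf_le hbdd ⟨ht, hle⟩).not_gt h
  · intro h
    obtain ⟨t', htt', ht'⟩ := exists_lt_distribInf_of_lt h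
    refine htt'.trans_le (le_csInf (exists_distribInf_le hf hs) fun v hv => ?_)
    by_contra! hvt
    exact (((antitone_distribInf f) hvt.le).trans hv.2).not_gt ht'

lemma antitoneOn_muInf (hf : IntegrableOn f (Ioi 0)) : AntitoneOn (muInf f) (Ioi 0) :=
  fun _ ha _ _ hab => csInf_le_csInf ⟨0, fun _ hv => hv.1⟩ (exists_distribInf_le hf ha)
    fun _ hv => ⟨hv.1, hv.2.trans (ENNReal.ofReal_le_ofReal hab)⟩

lemma volume_setOf_pos_ofReal_lt (D : ℝ≥0∞) :
    volume {s : ℝ | 0 < s ∧ ENNReal.ofReal s < D} = D := by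
  rcases eq_or_ne D ⊤ with rfl | hD
  · simp only [ENNReal.ofReal_lt_top, and_true]
    exact Real.volume_Ioi
  · have : {s : ℝ | 0 < s ∧ ENNReal.ofReal s < D} = Ioo 0 D.toReal := by
      ext s
      exact and_congr_right fun hs => ENNReal.ofReal_lt_iff_lt_toReal hs.le hD
    rw [this, Real.volume_Ioo, sub_zero, ENNReal.ofReal_toReal hD]

lemma restrict_setOf_lt_muInf (hf : IntegrableOn f (Ioi 0)) {t : ℝ} (ht : 0 ≤ t) :
    volume.restrict (Ioi 0) {s | t < muInf f s} = volume.restrict (Ioi 0) {x | t < |f x|} := by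
  rw [← distribInf_eq_restrict, Measure.restrict_apply' measurableSet_Ioi,
    ← volume_setOf_pos_ofReal_lt (distribInf f t)]
  congr 1
  ext s
  exact ⟨fun ⟨h, hs⟩ => ⟨hs, (lt_muInf_iff hf hs ht).1 h⟩,
    fun ⟨hs, h⟩ => ⟨(lt_muInf_iff hf hs ht).2 h, hs⟩⟩

lemma lintegral_ofReal_max_sub_eq {α : Type*} [MeasurableSpace α] (μ : Measure α) {φ : α → ℝ}
    (hφ : AEMeasurable φ μ) (l : ℝ) :
    ∫⁻ x, ENNReal.ofReal (max (φ x - l) 0) ∂μ = ∫⁻ t in Ioi 0, μ {x | l + t < φ x} := by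
  rw [lintegral_eq_lintegral_meas_lt (f := fun x => max (φ x - l) 0) μ
    (ae_of_all _ fun _ => le_max_right _ _)
    ((hφ.sub_const l).max aemeasurable_const)]
  refine setLIntegral_congr_fun measurableSet_Ioi fun t ht => congrArg μ (ext fun x => ?_)
  simp only [mem_ofPred_eq, lt_max_iff, or_iff_left (not_lt.2 (le_of_lt (mem_Ioi.1 ht))),
    lt_sub_iff_add_lt']

lemma lintegral_max_abs_sub_eq_muInf (hf : IntegrableOn f (Ioi 0)) {l : ℝ} (hl : 0 ≤ l) :
    ∫⁻ x in Ioi 0, ENNReal.ofReal (max (|f x| - l) 0) =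
      ∫⁻ s in Ioi 0, ENNReal.ofReal (max (muInf f s - l) 0) := by
  rw [lintegral_ofReal_max_sub_eq _ hf.aemeasurable.abs l, lintegral_ofReal_max_sub_eq _
    (aemeasurable_restrict_of_antitoneOn measurableSet_Ioi (antitoneOn_muInf hf)) l]
  exact setLIntegral_congr_fun measurableSet_Ioi fun t ht =>
    (restrict_setOf_lt_muInf hf (add_nonneg hl (le_of_lt ht))).symm

lemma lintegral_muInf_eq (hf : IntegrableOn f (Ioi 0)) :
    ∫⁻ s in Ioi 0, ENNReal.ofReal (muInf f s) = ∫⁻ x in Ioi 0, ENNReal.ofReal |f x| := by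
  simpa only [sub_zero, abs_nonneg, muInf_nonneg, max_eq_left] using
    (lintegral_max_abs_sub_eq_muInf hf le_rfl).symm

lemma lintegral_muInf_ne_top (hf : IntegrableOn f (Ioi 0)) :
    ∫⁻ s in Ioi 0, ENNReal.ofReal (muInf f s) ≠ ⊤ := by
  rw [lintegral_muInf_eq hf]
  exact lintegral_ofReal_abs_ne_top hf

lemma ofReal_muInf_mul_le (hf : IntegrableOn f (Ioi 0)) (hmaj : SubmajInf f g) {s : ℝ}
    (hs : 0 < s) :
    ENNReal.ofReal (muInf f s * s) ≤ ∫⁻ u in Ioi 0, ENNReal.ofReal (muInf g u) := calc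
  ENNReal.ofReal (muInf f s * s) = ∫⁻ _ in Ioo 0 s, ENNReal.ofReal (muInf f s) := by
    rw [setLIntegral_const, Real.volume_Ioo, sub_zero, ENNReal.ofReal_mul (muInf_nonneg f s)]
  _ ≤ ∫⁻ u in Ioo 0 s, ENNReal.ofReal (muInf f u) :=
    setLIntegral_mono_ae' measurableSet_Ioo (ae_of_all _ fun _ hu =>
      ENNReal.ofReal_le_ofReal (antitoneOn_muInf hf hu.1 hs hu.2.le))
  _ ≤ ∫⁻ u in Ioo 0 s, ENNReal.ofReal (muInf g u) := hmaj s hs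
  _ ≤ _ := lintegral_mono_set Ioo_subset_Ioi_self

lemma muInf_le_div_of_submajInf (hf : IntegrableOn f (Ioi 0)) (hg : IntegrableOn g (Ioi 0))
    (hmaj : SubmajInf f g) {s : ℝ} (hs : 0 < s) :
    muInf f s ≤ (∫⁻ u in Ioi 0, ENNReal.ofReal (muInf g u)).toReal / s := by
  rw [le_div_iff₀ hs]
  exact (ENNReal.ofReal_le_iff_le_toReal (lintegral_muInf_ne_top hg)).1
    (ofReal_muInf_mul_le hf hmaj hs)

lemma lintegral_max_abs_sub_le_of_submajInf (hf : IntegrableOn f (Ioi 0))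
    (hg : IntegrableOn g (Ioi 0)) (hmaj : SubmajInf f g) {ε l : ℝ} (hε : 0 < ε)
    (hl : (∫⁻ u in Ioi 0, ENNReal.ofReal (muInf g u)).toReal / ε ≤ l) :
    ∫⁻ x in Ioi 0, ENNReal.ofReal (max (|f x| - l) 0) ≤
      ∫⁻ s in Ioo 0 ε, ENNReal.ofReal (muInf g s) := by
  have hl0 : 0 ≤ l := (div_nonneg ENNReal.toReal_nonneg hε.le).trans hl
  have hvanish : ∀ s ∈ Ici ε, ENNReal.ofReal (max (muInf f s - l) 0) = 0 := fun s hs => by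
    have := (muInf_le_div_of_submajInf hf hg hmaj (hε.trans_le hs)).trans
      ((div_le_div_of_nonneg_left ENNReal.toReal_nonneg hε hs).trans hl)
    rw [max_eq_right (by linarith), ENNReal.ofReal_zero]
  rw [lintegral_max_abs_sub_eq_muInf hf hl0, ← Ioo_union_Ici_eq_Ioi hε,
    lintegral_union measurableSet_Ici (disjoint_left.2 fun _ hx hx' => not_le.2 hx.2 hx'),
    setLIntegral_congr_fun measurableSet_Ici hvanish, lintegral_zero, add_zero]
  calc _ ≤ ∫⁻ s in Ioo 0 ε, ENNReal.ofReal (muInf f s) :=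
        lintegral_mono fun s => ENNReal.ofReal_le_ofReal
          (max_le (by linarith [muInf_nonneg f s]) (muInf_nonneg f s))
    _ ≤ _ := hmaj ε hε

lemma eventually_lintegral_max_abs_sub_le (hg : IntegrableOn g (Ioi 0)) {δ : ℝ≥0∞}
    (hδ : δ ≠ 0) :
    ∀ᶠ l in atTop, ∀ f, IntegrableOn f (Ioi 0) → SubmajInf f g →
      ∫⁻ x in Ioi 0, ENNReal.ofReal (max (|f x| - l) 0) ≤ δ := by
  obtain ⟨η, hη, habs⟩ := exists_pos_setLIntegral_lt_of_measure_lt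
    (μ := volume.restrict (Ioi 0)) (lintegral_muInf_ne_top hg) hδ
  obtain ⟨ε, -, hε, hεη⟩ := ENNReal.lt_iff_exists_real_btwn.1 hη
  have hsmall : ∫⁻ s in Ioo 0 ε, ENNReal.ofReal (muInf g s) < δ := by
    have := habs (Ioo 0 ε) (by
      rwa [Measure.restrict_apply measurableSet_Ioo, inter_eq_left.2 Ioo_subset_Ioi_self,
        Real.volume_Ioo, sub_zero])
    rwa [Measure.restrict_restrict measurableSet_Ioo, inter_eq_left.2 Ioo_subset_Ioi_self] at this
  filter_upwards [eventually_ge_atTop ((∫⁻ u in Ioi 0, ENNReal.ofReal (muInf g u)).toReal / ε)]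
    with l hl f hf hmaj
  exact (lintegral_max_abs_sub_le_of_submajInf hf hg hmaj (ENNReal.ofReal_pos.1 hε) hl).trans
    hsmall.le

end Rearrangement

noncomputable def excessSum (lam : ℕ → ℝ) (t : ℝ) : ℝ :=
  ∑' n, max (t - lam n) 0

noncomputable def valleePoussinFun (lam : ℕ → ℝ) (t : ℝ) : ℝ :=
  t - 1 + (1 + t)⁻¹ + excessSum lam t

lemma sub_one_add_inv_one_add_eq {t : ℝ} (ht : 0 ≤ t) : t - 1 + (1 + t)⁻¹ = t ^ 2 / (1 + t) := by
  field_simp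
  ring

lemma sub_one_add_inv_one_add_le {t : ℝ} (ht : 0 ≤ t) : t - 1 + (1 + t)⁻¹ ≤ t := by
  linarith [inv_le_one_of_one_le₀ (le_add_of_nonneg_right ht : (1:ℝ) ≤ 1 + t)]

lemma convexOn_sub_one_add_inv_one_add : ConvexOn ℝ (Ici 0) fun t : ℝ => t - 1 + (1 + t)⁻¹ := by
  have hinv : ConvexOn ℝ (Ioi 0) fun x : ℝ => x⁻¹ := by
    simpa using convexOn_zpow (𝕜 := ℝ) (-1)
  have hshift := (hinv.translate_right 1).subset
    (fun t (ht : 0 ≤ t) => show (0:ℝ) < 1 + t by linarith) (convex_Ici 0)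
  exact ((convexOn_id (convex_Ici 0)).sub (concaveOn_const 1 (convex_Ici 0))).add hshift

lemma continuousOn_sub_one_add_inv_one_add :
    ContinuousOn (fun t : ℝ => t - 1 + (1 + t)⁻¹) (Ici 0) :=
  (continuous_id.sub continuous_const).continuousOn.add <|
    (continuous_const.add continuous_id).continuousOn.inv₀ fun t (ht : 0 ≤ t) => show (1:ℝ) + t ≠ 0 by positivity

lemma excessSum_nonneg (lam : ℕ → ℝ) (t : ℝ) : 0 ≤ excessSum lam t :=
  tsum_nonneg fun _ => le_max_right _ _

section ExcessSum

variable {lam : ℕ → ℝ} (hlam : ∀ n : ℕ, (n : ℝ) + 1 ≤ lam n)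
include hlam

lemma max_sub_eq_zero {t : ℝ} {n : ℕ} (h : t ≤ n + 1) : max (t - lam n) 0 = 0 :=
  max_eq_right (by linarith [hlam n])

lemma excessSum_eq_sum {t : ℝ} {N : ℕ} (h : t ≤ N) :
    excessSum lam t = ∑ n ∈ Finset.range N, max (t - lam n) 0 :=
  tsum_eq_sum fun n hn => max_sub_eq_zero hlam <| h.trans <| by
    simp only [Finset.mem_range, not_lt] at hn
    exact_mod_cast hn.trans n.le_succ

lemma summable_max_sub (t : ℝ) : Summable fun n => max (t - lam n) 0 := by
  obtain ⟨N, hN⟩ := exists_nat_ge t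
  refine summable_of_ne_finset_zero (s := Finset.range N) fun n hn => max_sub_eq_zero hlam ?_
  simp only [Finset.mem_range, not_lt] at hn
  exact hN.trans (by exact_mod_cast hn.trans n.le_succ)

lemma excessSum_eq_zero {t : ℝ} (ht : t ≤ 1) : excessSum lam t = 0 :=
  (tsum_congr fun n => max_sub_eq_zero hlam (by linarith [n.cast_nonneg (α := ℝ)])).trans
    tsum_zero

lemma sum_sub_le_excessSum (N : ℕ) (t : ℝ) :
    ∑ n ∈ Finset.range N, (t - lam n) ≤ excessSum lam t :=
  (Finset.sum_le_sum fun _ _ => le_max_left _ _).trans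
    ((summable_max_sub hlam t).sum_le_tsum _ fun _ _ => le_max_right _ _)

lemma convexOn_excessSum : ConvexOn ℝ univ (excessSum lam) := by
  refine ⟨convex_univ, fun x _ y _ a b ha hb hab => ?_⟩
  have hterm : ∀ n, max (a • x + b • y - lam n) 0 ≤
      a * max (x - lam n) 0 + b * max (y - lam n) 0 := fun n => by
    have hsplit : a • x + b • y - lam n = a * (x - lam n) + b * (y - lam n) := by
      simp only [smul_eq_mul]
      linear_combination lam n * hab
    rw [hsplit]
    exact max_le (add_le_add (mul_le_mul_of_nonneg_left (le_max_left _ _) ha)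
        (mul_le_mul_of_nonneg_left (le_max_left _ _) hb))
      (add_nonneg (mul_nonneg ha (le_max_right _ _)) (mul_nonneg hb (le_max_right _ _)))
  have hx := (summable_max_sub hlam x).mul_left a
  have hy := (summable_max_sub hlam y).mul_left b
  calc excessSum lam (a • x + b • y)
      ≤ ∑' n, (a * max (x - lam n) 0 + b * max (y - lam n) 0) :=
        (summable_max_sub hlam _).tsum_le_tsum hterm (hx.add hy)
    _ = a • excessSum lam x + b • excessSum lam y := by
        rw [hx.tsum_add hy, tsum_mul_left, tsum_mul_left]
        rfl

lemma continuous_excessSum : Continuous (excessSum lam) := by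
  refine continuous_iff_continuousAt.2 fun x => ?_
  obtain ⟨N, hN⟩ := exists_nat_gt x
  have hsum : Continuous fun t => ∑ n ∈ Finset.range N, max (t - lam n) 0 := by fun_prop
  refine hsum.continuousAt.congr ?_
  filter_upwards [Iio_mem_nhds hN] with t ht
  exact (excessSum_eq_sum hlam (le_of_lt ht)).symm

lemma tendsto_excessSum_div_atTop : Tendsto (fun t => excessSum lam t / t) atTop atTop := by
  refine tendsto_atTop.2 fun b => ?_
  obtain ⟨N, hN⟩ := exists_nat_ge (b + 1)
  set c := ∑ n ∈ Finset.range N, lam n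
  filter_upwards [eventually_ge_atTop (max 1 c)] with t ht
  have ht0 : 0 < t := one_pos.trans_le ((le_max_left _ _).trans ht)
  have hc : c / t ≤ 1 := (div_le_one ht0).2 ((le_max_right _ _).trans ht)
  calc b ≤ N - c / t := by linarith
    _ = (∑ n ∈ Finset.range N, (t - lam n)) / t := by
        rw [Finset.sum_sub_distrib, Finset.sum_const, Finset.card_range, nsmul_eq_mul, sub_div,
          mul_div_cancel_right₀ _ ht0.ne']
    _ ≤ excessSum lam t / t := by
        gcongr
        exact sum_sub_le_excessSum hlam N t

end ExcessSum

section ValleePoussin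

variable {lam : ℕ → ℝ} (hlam : ∀ n : ℕ, (n : ℝ) + 1 ≤ lam n)
include hlam

lemma valleePoussinFun_div_eq {t : ℝ} (ht : t ∈ Ioo 0 1) :
    valleePoussinFun lam t / t = t / (1 + t) := by
  rw [valleePoussinFun, excessSum_eq_zero hlam ht.2.le, add_zero,
    sub_one_add_inv_one_add_eq ht.1.le]
  field_simp [ht.1.ne']

lemma isNFunction_valleePoussinFun : IsNFunction (valleePoussinFun lam) := by
  have hbase_pos : ∀ t : ℝ, 0 < t → 0 < t - 1 + (1 + t)⁻¹ := fun t ht => by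
    rw [sub_one_add_inv_one_add_eq ht.le]
    positivity
  refine ⟨continuousOn_sub_one_add_inv_one_add.add (continuous_excessSum hlam).continuousOn,
    convexOn_sub_one_add_inv_one_add.add ((convexOn_excessSum hlam).subset (subset_univ _)
      (convex_Ici 0)),
    fun t ht => ?_, ?_, fun t ht => add_pos_of_pos_of_nonneg (hbase_pos t ht)
      (excessSum_nonneg lam t), ?_, ?_⟩
  · rcases ht.eq_or_lt with rfl | ht
    · simp [valleePoussinFun, excessSum_eq_zero hlam zero_le_one]
    · exact add_nonneg (hbase_pos t ht).le (excessSum_nonneg lam t)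
  · simp [valleePoussinFun, excessSum_eq_zero hlam zero_le_one]
  · have hlim : Tendsto (fun t : ℝ => t / (1 + t)) (𝓝 0) (𝓝 (0 / (1 + 0))) :=
      tendsto_id.div (tendsto_const_nhds.add tendsto_id) (by norm_num)
    rw [zero_div] at hlim
    exact (hlim.mono_left nhdsWithin_le_nhds).congr' <| eventually_of_mem
      (Ioo_mem_nhdsGT one_pos) fun t ht => (valleePoussinFun_div_eq hlam ht).symm
  · refine tendsto_atTop_mono' _ ?_ (tendsto_excessSum_div_atTop hlam)
    filter_upwards [eventually_gt_atTop 0] with t ht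
    exact div_le_div_of_nonneg_right (le_add_of_nonneg_left (hbase_pos t ht).le) ht.le

lemma lintegral_valleePoussinFun_le {α : Type*} [MeasurableSpace α] {μ : Measure α} {φ : α → ℝ}
    (hφ : AEMeasurable φ μ) :
    ∫⁻ x, ENNReal.ofReal (valleePoussinFun lam |φ x|) ∂μ ≤
      ∫⁻ x, ENNReal.ofReal |φ x| ∂μ + ∑' n, ∫⁻ x, ENNReal.ofReal (max (|φ x| - lam n) 0) ∂μ := by
  rw [← lintegral_tsum fun n => ((hφ.abs.sub_const _).max aemeasurable_const).ennreal_ofReal,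
    ← lintegral_add_left' hφ.abs.ennreal_ofReal]
  refine lintegral_mono fun x => ?_
  calc ENNReal.ofReal (valleePoussinFun lam |φ x|)
      ≤ ENNReal.ofReal (|φ x| + excessSum lam |φ x|) := ENNReal.ofReal_le_ofReal <|
        add_le_add (sub_one_add_inv_one_add_le (abs_nonneg _)) le_rfl
    _ ≤ ENNReal.ofReal |φ x| + ENNReal.ofReal (excessSum lam |φ x|) := ENNReal.ofReal_add_le
    _ = _ := by
        rw [excessSum, ENNReal.ofReal_tsum_of_nonneg (fun _ => le_max_right _ _)
          (summable_max_sub hlam _)]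

end ValleePoussin

theorem stmt9_general (K : Set (ℝ → ℝ))
    (hK : ∀ f ∈ K, IntegrableOn f (Ioi 0) volume)
    (hKb : ∃ C : ℝ, ∀ f ∈ K, ∫ x in Ioi (0:ℝ), |f x| ≤ C)
    (g : ℝ → ℝ)
    (hgi : IntegrableOn g (Ioi 0) volume)
    (hmaj : ∀ f ∈ K, SubmajInf f g) :
    ∃ G : ℝ → ℝ, IsNFunction G ∧
      ∃ C : ℝ, ∀ f ∈ K,
        ∫⁻ s in Ioi (0:ℝ), ENNReal.ofReal (G |f s|) ≤ ENNReal.ofReal C := by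
  obtain ⟨C, hC⟩ := hKb
  have hthresholds : ∀ n : ℕ, ∃ l : ℝ, (n : ℝ) + 1 ≤ l ∧
      ∀ f ∈ K, ∫⁻ x in Ioi 0, ENNReal.ofReal (max (|f x| - l) 0) ≤ 2⁻¹ ^ n := fun n =>
    ((eventually_ge_atTop _).and (eventually_lintegral_max_abs_sub_le hgi
      (pow_ne_zero n (ENNReal.inv_ne_zero.2 ENNReal.ofNat_ne_top)))).exists.imp
      fun _ hl => ⟨hl.1, fun f hf => hl.2 f (hK f hf) (hmaj f hf)⟩
  choose lam hlam htail using hthresholds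
  refine ⟨valleePoussinFun lam, isNFunction_valleePoussinFun hlam, max C 0 + 2, fun f hf => ?_⟩
  have hL1 : ∫⁻ x in Ioi 0, ENNReal.ofReal |f x| ≤ ENNReal.ofReal (max C 0) := by
    rw [← ofReal_integral_eq_lintegral_ofReal (Integrable.abs (hK f hf))
      (ae_of_all _ fun _ => abs_nonneg _)]
    exact ENNReal.ofReal_le_ofReal ((hC f hf).trans (le_max_left _ _))
  calc _ ≤ _ := lintegral_valleePoussinFun_le hlam (hK f hf).aemeasurable
    _ ≤ ENNReal.ofReal (max C 0) + ∑' n : ℕ, 2⁻¹ ^ n :=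
        add_le_add hL1 (ENNReal.tsum_le_tsum fun n => htail n f hf)
    _ = ENNReal.ofReal (max C 0 + 2) := by
        rw [ENNReal.tsum_geometric, ENNReal.one_sub_inv_two, inv_inv,
          ENNReal.ofReal_add (le_max_right _ _) zero_le_two, ENNReal.ofReal_ofNat]

theorem stmt9 (K : Set (ℝ → ℝ))
    (hK : ∀ f ∈ K, IntegrableOn f (Ioi 0) volume)
    (hKb : ∃ C : ℝ, ∀ f ∈ K, ∫ x in Ioi (0:ℝ), |f x| ≤ C)
    (g : ℝ → ℝ) (hg0 : ∀ x ∈ Ioi (0:ℝ), 0 < g x)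
    (hgi : IntegrableOn g (Ioi 0) volume)
    (hmaj : ∀ f ∈ K, SubmajInf f g) :
    ∃ G : ℝ → ℝ, IsNFunction G ∧
      ∃ C : ℝ, ∀ f ∈ K,
        ∫⁻ s in Ioi (0:ℝ), ENNReal.ofReal (G |f s|) ≤ ENNReal.ofReal C :=
  stmt9_general K hK hKb g hgi hmaj
end
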